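/- Fix c > 1 and r ∈ (1,2), and let B_{c,r}(x,y,w,v) = y·w − (rc/(2−r))·x²/v^{r−1} on ℝ × [0,∞) × Ω_c^r. Suppose (x,y,w,v) ∈ ℝ × [0,∞) × Ω_c^r, and let e, f be real numbers such that the entire line segment with endpoints (w−e, v−f) and (w+e, v+f) is contained in Ω_c^r. Then for every d ∈ ℝ: 2·B_{c,r}(x,y,w,v) ≥ B_{c,r}(x−d, y+d², w−e, v−f) + B_{c,r}(x+d, y+d², w+e, v+f). -/

import Mathlib

open Real Set

/-- Membership in the hyperbolic domain `Ω_c^r = {(w,v) ∈ (0,∞)² : 1 ≤ w v^{r-1} ≤ c}`. -/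
noncomputable def memOmegaR (c r w v : ℝ) : Prop :=
  0 < w ∧ 0 < v ∧ 1 ≤ w * v ^ (r - 1) ∧ w * v ^ (r - 1) ≤ c

/-- The Bellman function `B_{c,r}(x,y,w,v) = y w - (rc/(2-r)) x²/v^{r-1}`. -/
noncomputable def Bcr (c r x y w v : ℝ) : ℝ := y * w - (r * c / (2 - r)) * x ^ 2 / v ^ (r - 1)

lemma hasDerivAt_one_add_rpow (τ x : ℝ) (hx : 0 < 1 + x) :
    HasDerivAt (fun h : ℝ => (1+h)^τ) (τ*(1+x)^(τ-1)) x := by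
  have h1 : HasDerivAt (fun h : ℝ => 1 + h) 1 x := (hasDerivAt_id x).const_add 1
  have h2 := (Real.hasDerivAt_rpow_const (x := 1+x) (p := τ) (Or.inl hx.ne')).comp x h1
  simpa [Function.comp_def] using h2

lemma hasDerivAt_one_sub_rpow (τ x : ℝ) (hx : 0 < 1 - x) :
    HasDerivAt (fun h : ℝ => (1-h)^τ) (-(τ*(1-x)^(τ-1))) x := by
  have h1 : HasDerivAt (fun h : ℝ => 1 - h) (-1) x := (hasDerivAt_id x).const_sub 1
  have h2 := (Real.hasDerivAt_rpow_const (x := 1-x) (p := τ) (Or.inl hx.ne')).comp x h1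
  have : HasDerivAt (fun h : ℝ => (1-h)^τ) (τ*(1-x)^(τ-1) * (-1)) x := by
    simpa [Function.comp_def] using h2
  convert this using 1; ring

lemma hasDerivAt_one_sub_sq_rpow (τ x : ℝ) (hx : 0 < 1 - x^2) :
    HasDerivAt (fun h : ℝ => (1-h^2)^τ) (-(2*x*τ*(1-x^2)^(τ-1))) x := by
  have h1 : HasDerivAt (fun h : ℝ => 1 - h^2) (-(2*x)) x := by
    have := (hasDerivAt_pow 2 x).const_sub 1
    simpa using this
  have h2 := (Real.hasDerivAt_rpow_const (x := 1-x^2) (p := τ) (Or.inl hx.ne')).comp x h1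
  have : HasDerivAt (fun h : ℝ => (1-h^2)^τ) (τ*(1-x^2)^(τ-1) * (-(2*x))) x := by
    simpa [Function.comp_def] using h2
  convert this using 1; ring

/-- Key inequality: `(1-h)^τ + 2τh ≤ (1+h)^τ` for `τ ∈ (0,1)`, `h ∈ [0,1)`. -/
lemma lemB (τ : ℝ) (hτ0 : 0 < τ) (hτ1 : τ < 1) {h : ℝ} (hh0 : 0 ≤ h) (hh1 : h < 1) :
    (1-h)^τ + 2*τ*h ≤ (1+h)^τ := by
  set F : ℝ → ℝ := fun z => (1+z)^τ - (1-z)^τ - 2*τ*z with hF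
  have hder : ∀ x ∈ Ico (0:ℝ) 1, HasDerivAt F (τ*(1+x)^(τ-1) + τ*(1-x)^(τ-1) - 2*τ) x := by
    intro x hx
    have hx1 : 0 < 1 + x := by have := hx.1; linarith
    have hx2 : 0 < 1 - x := by have := hx.2; linarith
    have := ((hasDerivAt_one_add_rpow τ x hx1).sub (hasDerivAt_one_sub_rpow τ x hx2)).sub
      ((hasDerivAt_id x).const_mul (2*τ))
    exact this.congr_deriv (by ring)
  have hmono : MonotoneOn F (Ico (0:ℝ) 1) := by
    apply monotoneOn_of_deriv_nonneg (convex_Ico 0 1)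
    · exact fun x hx => (hder x hx).continuousAt.continuousWithinAt
    · rw [interior_Ico]
      exact fun x hx => ((hder x (Ioo_subset_Ico_self hx)).differentiableAt).differentiableWithinAt
    · rw [interior_Ico]
      intro x hx
      rw [(hder x (Ioo_subset_Ico_self hx)).deriv]
      have hx1 : 0 < 1 + x := by have := hx.1; linarith
      have hx2 : 0 < 1 - x := by have := hx.2; linarith
      set p := (1+x)^(τ-1) with hp'
      set q := (1-x)^(τ-1) with hq'
      have hp : 0 < p := rpow_pos_of_pos hx1 _
      have hq : 0 < q := rpow_pos_of_pos hx2 _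
      have hpq : 1 ≤ p * q := by
        rw [hp', hq', ← Real.mul_rpow hx1.le hx2.le]
        apply Real.one_le_rpow_of_pos_of_le_one_of_nonpos
        · nlinarith [hx.1, hx.2]
        · nlinarith [hx.1]
        · linarith
      have hsum : 2 ≤ p + q := by nlinarith [sq_nonneg (p - q), mul_pos hp hq]
      nlinarith
  have h0 : F 0 = 0 := by simp [hF]
  have := hmono (Set.mem_Ico.2 ⟨le_rfl, one_pos⟩) (Set.mem_Ico.2 ⟨hh0, hh1⟩) hh0
  rw [h0] at this
  simp only [hF] at this
  linarith

/-- Key inequality: `(1+h)^s + (1-h)^s ≤ (1+s) + (1-s)(1-h²)^s` for `s ∈ (0,1)`, `h ∈ [0,1)`. -/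
lemma lemC0 (s : ℝ) (hs0 : 0 < s) (hs1 : s < 1) {h : ℝ} (hh0 : 0 ≤ h) (hh1 : h < 1) :
    (1+h)^s + (1-h)^s ≤ (1+s) + (1-s)*(1-h^2)^s := by
  set θ : ℝ → ℝ := fun z => (1+z)^s + (1-z)^s - (1-s)*(1-z^2)^s with hθ
  have hder : ∀ x ∈ Ico (0:ℝ) 1, HasDerivAt θ
      (s*(1+x)^(s-1) - s*(1-x)^(s-1) + 2*x*s*(1-s)*(1-x^2)^(s-1)) x := by
    intro x hx
    have hx1 : 0 < 1 + x := by have := hx.1; linarith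
    have hx2 : 0 < 1 - x := by have := hx.2; linarith
    have hx3 : 0 < 1 - x^2 := by nlinarith [hx.1, hx.2]
    have := ((hasDerivAt_one_add_rpow s x hx1).add (hasDerivAt_one_sub_rpow s x hx2)).sub
      ((hasDerivAt_one_sub_sq_rpow s x hx3).const_mul (1-s))
    exact this.congr_deriv (by ring)
  have hanti : AntitoneOn θ (Ico (0:ℝ) 1) := by
    apply antitoneOn_of_deriv_nonpos (convex_Ico 0 1)
    · exact fun x hx => (hder x hx).continuousAt.continuousWithinAt
    · rw [interior_Ico]
      exact fun x hx => ((hder x (Ioo_subset_Ico_self hx)).differentiableAt).differentiableWithinAt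
    · rw [interior_Ico]
      intro x hx
      rw [(hder x (Ioo_subset_Ico_self hx)).deriv]
      have hx1 : 0 < 1 + x := by have := hx.1; linarith
      have hx2 : 0 < 1 - x := by have := hx.2; linarith
      have hx3 : 0 < 1 - x^2 := by nlinarith [hx.1, hx.2]
      have hB := lemB (1-s) (by linarith) (by linarith) hx.1.le hx.2
      set M := (1-x^2)^(s-1) with hM'
      have hMpos : 0 < M := rpow_pos_of_pos hx3 _
      have hfac : (1:ℝ) - x^2 = (1+x)*(1-x) := by ring
      have hid1 : M * (1-x)^(1-s) = (1+x)^(s-1) := by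
        rw [hM', hfac, Real.mul_rpow hx1.le hx2.le, mul_assoc, ← Real.rpow_add hx2]
        norm_num
      have hid2 : M * (1+x)^(1-s) = (1-x)^(s-1) := by
        rw [hM', hfac, Real.mul_rpow hx1.le hx2.le, mul_comm ((1+x)^(s-1)), mul_assoc,
          ← Real.rpow_add hx1]
        norm_num
      have hmul := mul_le_mul_of_nonneg_left hB (mul_pos hs0 hMpos).le
      have hid1' : s * (M * (1-x)^(1-s)) = s * (1+x)^(s-1) := by rw [hid1]
      have hid2' : s * (M * (1+x)^(1-s)) = s * (1-x)^(s-1) := by rw [hid2]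
      nlinarith [hmul, hid1', hid2']
  have h0 : θ 0 = 1 + s := by
    norm_num [hθ]; ring
  have := hanti (Set.mem_Ico.2 ⟨le_rfl, one_pos⟩) (Set.mem_Ico.2 ⟨hh0, hh1⟩) hh0
  rw [h0] at this
  simp only [hθ] at this
  linarith

/-- Two-variable form: `a^s + b^s ≤ (1+s) + (1-s)(ab)^s` when `a + b = 2`. -/
lemma lemCab (s : ℝ) (hs0 : 0 < s) (hs1 : s < 1) (a b : ℝ) (ha : 0 < a) (hb : 0 < b)
    (hab : a + b = 2) : a^s + b^s ≤ (1+s) + (1-s)*(a*b)^s := by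
  wlog hba : b ≤ a generalizing a b
  · have := this b a hb ha (by linarith) (by linarith)
    rw [mul_comm b a] at this
    linarith
  have hh0 : 0 ≤ a - 1 := by linarith
  have hh1 : a - 1 < 1 := by linarith
  have ha1 : a = 1 + (a-1) := by ring
  have hb1 : b = 1 - (a-1) := by linarith
  have hab2 : a*b = 1 - (a-1)^2 := by nlinarith
  rw [hab2]
  calc a^s + b^s = (1+(a-1))^s + (1-(a-1))^s := by rw [← ha1, ← hb1]
    _ ≤ (1+s) + (1-s)*(1-(a-1)^2)^s := lemC0 s hs0 hs1 hh0 hh1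

lemma quadNonneg (a b c X : ℝ) (ha : 0 ≤ a) (hc : 0 ≤ c) (hd : b^2 ≤ 4*(a*c)) :
    0 ≤ a*X^2 + b*X + c := by
  rcases ha.eq_or_lt with h|h
  · have hb : b = 0 := by nlinarith [sq_nonneg b]
    rw [← h, hb]; simpa using hc
  · nlinarith [sq_nonneg (2*a*X + b), h]

/-- The quadratic-form step: from the two scalar inequalities on `A,B,M`, deduce the
main convexity estimate. -/
lemma quadStep (s x d A B M : ℝ) (hs0 : 0 < s) (hs1 : s < 1) (hA : 0 < A) (hB : 0 < B)
    (hM : 0 < M) (hABM : A*B ≤ M^2)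
    (hcore : M*(A+B) ≤ (1+s)*M^2 + (1-s)*(A*B)) :
    2*x^2/M + 2*d^2*(1-s)/((1+s)*M) ≤ (x-d)^2/A + (x+d)^2/B := by
  have h1s : (0:ℝ) < 1 + s := by linarith
  have hp : (0:ℝ) < A⁻¹ := by positivity
  have hq : (0:ℝ) < B⁻¹ := by positivity
  have hm : (0:ℝ) < M⁻¹ := by positivity
  have hnum : 0 ≤ M*(A+B) - 2*(A*B) := by
    nlinarith [mul_nonneg hA.le (sq_nonneg (M-B)), mul_nonneg hB.le (sq_nonneg (M-A)),
      mul_pos hA hB, hM]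
  have hm2 : 2*M⁻¹ ≤ A⁻¹ + B⁻¹ := by
    have e : A⁻¹ + B⁻¹ - 2*M⁻¹ = (M*(A+B) - 2*(A*B))/(A*B*M) := by
      field_simp; ring
    have := div_nonneg hnum (by positivity : (0:ℝ) ≤ A*B*M)
    linarith [e ▸ this]
  have hcorem : M⁻¹*(A⁻¹+B⁻¹) ≤ (1+s)*(A⁻¹*B⁻¹) + (1-s)*(M⁻¹)^2 := by
    have e : (1+s)*(A⁻¹*B⁻¹) + (1-s)*(M⁻¹)^2 - M⁻¹*(A⁻¹+B⁻¹)
        = ((1+s)*M^2 + (1-s)*(A*B) - M*(A+B))/(A*B*M^2) := by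
      field_simp; ring
    have := div_nonneg (by linarith : 0 ≤ (1+s)*M^2 + (1-s)*(A*B) - M*(A+B))
      (by positivity : (0:ℝ) ≤ A*B*M^2)
    linarith [e ▸ this]
  set p := A⁻¹
  set q := B⁻¹
  set m := M⁻¹
  have key : 0 ≤ ((1+s)*(p+q-2*m))*x^2 + ((1+s)*(2*d*(q-p)))*x
      + ((1+s)*(d^2*(p+q)) - 2*d^2*(1-s)*m) := by
    apply quadNonneg
    · nlinarith
    · nlinarith [mul_nonneg (mul_nonneg (sq_nonneg d) (by linarith : 0 ≤ p+q-2*m)) h1s.le,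
        mul_nonneg (mul_nonneg hs0.le (sq_nonneg d)) hm.le]
    · nlinarith [mul_nonneg (mul_nonneg (by positivity : (0:ℝ) ≤ 16*d^2) h1s.le)
        (by nlinarith : 0 ≤ (1+s)*(p*q) + (1-s)*m^2 - m*(p+q))]
  rw [← sub_nonneg]
  have expand : (x-d)^2/A + (x+d)^2/B - (2*x^2/M + 2*d^2*(1-s)/((1+s)*M))
      = (((1+s)*(p+q-2*m))*x^2 + ((1+s)*(2*d*(q-p)))*x
        + ((1+s)*(d^2*(p+q)) - 2*d^2*(1-s)*m)) / (1+s) := by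
    simp only [p, q, m]
    field_simp [hA.ne', hB.ne', hM.ne', h1s.ne']
    ring
  rw [expand]
  exact div_nonneg key h1s.le

set_option maxHeartbeats 1000000 in
/-- Concavity-type property of `B_{c,r}`: if the line segment with endpoints `(w±e, v±f)` lies
in `Ω_c^r`, then `2 B_{c,r}(x,y,w,v) ≥ B_{c,r}(x-d, y+d², w-e, v-f) + B_{c,r}(x+d, y+d², w+e, v+f)`. -/
theorem Bcr_concavity (c r : ℝ) (hc : 1 < c) (hr1 : 1 < r) (hr2 : r < 2)
    (x y w v e f : ℝ) (hy : 0 ≤ y) (hmem : memOmegaR c r w v)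
    (hseg : ∀ t : ℝ, -1 ≤ t → t ≤ 1 → memOmegaR c r (w + t * e) (v + t * f))
    (d : ℝ) :
    Bcr c r (x - d) (y + d ^ 2) (w - e) (v - f) + Bcr c r (x + d) (y + d ^ 2) (w + e) (v + f)
      ≤ 2 * Bcr c r x y w v := by
  simp only [memOmegaR] at hmem hseg
  simp only [Bcr]
  obtain ⟨hw, hv, h1wv, hwc⟩ := hmem
  have hs0 : 0 < r - 1 := by linarith
  have hs1 : r - 1 < 1 := by linarith
  have hvf1 : 0 < v - f := by
    have := (hseg (-1) (by norm_num) (by norm_num)).2.1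
    linarith
  have hvf2 : 0 < v + f := by
    have := (hseg 1 (by norm_num) le_rfl).2.1
    linarith
  set s := r - 1 with hsdef
  set A := (v - f) ^ s with hAdef
  set B := (v + f) ^ s with hBdef
  set M := v ^ s with hMdef
  have hA : 0 < A := rpow_pos_of_pos hvf1 _
  have hB : 0 < B := rpow_pos_of_pos hvf2 _
  have hM : 0 < M := rpow_pos_of_pos hv _
  have hABM : A*B ≤ M^2 := by
    rw [hAdef, hBdef, hMdef, ← Real.mul_rpow hvf1.le hvf2.le, sq, ← Real.mul_rpow hv.le hv.le]
    exact Real.rpow_le_rpow (by positivity) (by nlinarith [sq_nonneg f]) (by linarith)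
  have hav : (v-f)/v + (v+f)/v = 2 := by
    field_simp
    ring
  have hC := lemCab s hs0 hs1 ((v-f)/v) ((v+f)/v) (by positivity) (by positivity) hav
  have hprod : ((v-f)/v) * ((v+f)/v) = ((v-f)*(v+f))/(v*v) := by ring
  rw [hprod, Real.div_rpow hvf1.le hv.le, Real.div_rpow hvf2.le hv.le,
    Real.div_rpow (by positivity) (by positivity), Real.mul_rpow hvf1.le hvf2.le,
    Real.mul_rpow hv.le hv.le] at hC
  have hcore : M*(A+B) ≤ (1+s)*M^2 + (1-s)*(A*B) := by
    have e : ((1+s) + (1-s)*((A*B)/(M*M)) - (A/M + B/M)) * M^2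
        = (1+s)*M^2 + (1-s)*(A*B) - M*(A+B) := by
      field_simp
    nlinarith [mul_nonneg (by linarith : 0 ≤ (1+s) + (1-s)*((A*B)/(M*M)) - (A/M + B/M))
      (sq_nonneg M), e]
  have QS := quadStep s x d A B M hs0 hs1 hA hB hM hABM hcore
  have hK : 0 < r*c/(2-r) := div_pos (mul_pos (by linarith) (by linarith)) (by linarith)
  have QS' := mul_le_mul_of_nonneg_left QS hK.le
  have eK : (r*c/(2-r)) * (2*d^2*(1-s)/((1+s)*M)) = 2*d^2*(c/M) := by
    rw [hsdef]
    have h2r : (2:ℝ) - r ≠ 0 := by linarith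
    have hr0 : (1:ℝ) + (r - 1) ≠ 0 := by linarith
    field_simp
    ring
  have hw2 : 2*d^2*w ≤ 2*d^2*(c/M) := by
    have hwcM : w ≤ c/M := (le_div_iff₀ hM).2 hwc
    exact mul_le_mul_of_nonneg_left hwcM (by positivity)
  have QS2 : (r*c/(2-r))*(2*x^2/M) + 2*d^2*(c/M)
      ≤ (r*c/(2-r))*((x-d)^2/A + (x+d)^2/B) := by
    have h := QS'
    rw [mul_add, eK] at h
    linarith
  have e2 : (r*c/(2-r))*((x-d)^2/A + (x+d)^2/B)
      = r*c/(2-r)*(x-d)^2/A + r*c/(2-r)*(x+d)^2/B := by ring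
  rw [e2] at QS2
  have e3 : (r*c/(2-r))*(2*x^2/M) = 2*(r*c/(2-r)*x^2/M) := by ring
  rw [e3] at QS2
  linarith
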